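/- arXiv:2210.07394 — 5 statements merged into one kernel-verified Lean document; each statement's English description precedes it below -/
import Mathlib

section
/- Let L ≤ U and define s̲ = (-ReLU(-U) + ReLU(-L))/(U - L), t̲ = -s̲·L - ReLU(-L), s̄ = (ReLU(U) - ReLU(L))/(U - L), t̄ = -s̄·L + ReLU(L) (assuming L < U). Then for all J ∈ [L, U] and all δ ∈ [0, 1]: s̲·J + t̲ ≤ J·δ ≤ s̄·J + t̄. -/
/-! The upper line is the chord of the convex function `relu` over `[L, U]`, and the lower line is
the negative of the chord of the convex function `x ↦ relu (-x)`. A convex function lies below its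
chords, and for `δ ∈ [0, 1]` the product `J * δ` lies between `-relu (-J) = min J 0` and
`relu J = max J 0`. -/

def relu (x : ℝ) : ℝ := max x 0

open Set

theorem ConvexOn.le_secant {𝕜 : Type*} [Field 𝕜] [LinearOrder 𝕜] [IsStrictOrderedRing 𝕜]
    {s : Set 𝕜} {f : 𝕜 → 𝕜} (hf : ConvexOn 𝕜 s f) {x y z : 𝕜} (hx : x ∈ s) (hz : z ∈ s)
    (hxy : x ≤ y) (hyz : y ≤ z) (hxz : x < z) :
    f y ≤ (f z - f x) / (z - x) * (y - x) + f x := by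
  have hzx : 0 < z - x := sub_pos.2 hxz
  have key := hf.2 hx hz (div_nonneg (sub_nonneg.2 hyz) hzx.le)
    (div_nonneg (sub_nonneg.2 hxy) hzx.le) (by field_simp; ring)
  have hy : ((z - y) / (z - x)) • x + ((y - x) / (z - x)) • z = y := by
    simp only [smul_eq_mul]; field_simp; ring
  rw [hy, smul_eq_mul, smul_eq_mul] at key
  calc f y ≤ (z - y) / (z - x) * f x + (y - x) / (z - x) * f z := key
    _ = (f z - f x) / (z - x) * (y - x) + f x := by field_simp; ring

theorem convexOn_relu : ConvexOn ℝ univ relu :=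
  (convexOn_id convex_univ).sup (convexOn_const 0 convex_univ)

theorem convexOn_relu_neg : ConvexOn ℝ univ fun x => relu (-x) :=
  (concaveOn_id convex_univ).neg.sup (convexOn_const 0 convex_univ)

theorem mul_le_relu (x : ℝ) {δ : ℝ} (hδ₀ : 0 ≤ δ) (hδ₁ : δ ≤ 1) : x * δ ≤ relu x := by
  rcases le_total 0 x with hx | hx
  · exact (mul_le_of_le_one_right hx hδ₁).trans (le_max_left x 0)
  · exact (mul_nonpos_of_nonpos_of_nonneg hx hδ₀).trans (le_max_right x 0)

theorem neg_relu_neg_le_mul (x : ℝ) {δ : ℝ} (hδ₀ : 0 ≤ δ) (hδ₁ : δ ≤ 1) : -relu (-x) ≤ x * δ := by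
  linarith [mul_le_relu (-x) hδ₀ hδ₁, neg_mul x δ]

theorem clarke_relaxation_general (L U : ℝ) (hLU : L < U)
    (sl tl su tu : ℝ)
    (hsl : sl = (-relu (-U) + relu (-L)) / (U - L))
    (htl : tl = -sl * L - relu (-L))
    (hsu : su = (relu U - relu L) / (U - L))
    (htu : tu = -su * L + relu L) :
    ∀ J δ : ℝ, L ≤ J → J ≤ U → 0 ≤ δ → δ ≤ 1 →
      sl * J + tl ≤ J * δ ∧ J * δ ≤ su * J + tu := by
  intro J δ hLJ hJU hδ₀ hδ₁
  have lower := convexOn_relu_neg.le_secant (mem_univ L) (mem_univ U) hLJ hJU hLU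
  have upper := convexOn_relu.le_secant (mem_univ L) (mem_univ U) hLJ hJU hLU
  have hsl' : sl = -((relu (-U) - relu (-L)) / (U - L)) := by rw [hsl]; ring
  subst htl htu hsu
  rw [hsl']
  constructor
  · linarith [neg_relu_neg_le_mul J hδ₀ hδ₁]
  · linarith [mul_le_relu J hδ₀ hδ₁]
end

section
/- Let L < 0 < U and let s̲, t̲ be the coefficients s̲ = -L/(U-L), t̲ = L·U/(U-L). Suppose real numbers s, t satisfy s·J + t ≤ J·δ for all J ∈ [L, U] and all δ ∈ [0, 1], and (s, t) ≠ (s̲, t̲). Then for every J with L < J < U, s·J + t < s̲·J + t̲. -/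
/-!
Both `J ↦ s * J + t` and the lower relaxation `J ↦ s̲ * J + t̲` are affine, and the relaxation is
the chord of `J ↦ min J 0` through `(L, L)` and `(U, 0)`. Validity at `(J, δ) = (L, 1)` and
`(U, 0)` puts `s * J + t` below the chord at both endpoints; an affine function below another at
two points is strictly below it in between unless the two coincide.
-/

theorem affine_lt_of_le_of_le {a b x s t s' t' : ℝ} (hax : a < x) (hxb : x < b)
    (ha : s * a + t ≤ s' * a + t') (hb : s * b + t ≤ s' * b + t') (hne : (s, t) ≠ (s', t')) :
    s * x + t < s' * x + t' := by
  by_contra! hx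
  -- `(b - a) D x = (b - x) D a + (x - a) D b` for the affine gap `D y = (s' - s) y + (t' - t)`.
  have hDa : s * a + t = s' * a + t' := by
    nlinarith [mul_nonneg (sub_nonneg.2 hxb.le) (sub_nonneg.2 ha),
      mul_nonneg (sub_nonneg.2 hax.le) (sub_nonneg.2 hb)]
  have hDb : s * b + t = s' * b + t' := by
    nlinarith [mul_nonneg (sub_nonneg.2 hxb.le) (sub_nonneg.2 ha),
      mul_nonneg (sub_nonneg.2 hax.le) (sub_nonneg.2 hb)]
  have hs : s = s' := by
    have : (s - s') * (b - a) = 0 := by linarith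
    exact sub_eq_zero.1 ((mul_eq_zero.1 this).resolve_right (by linarith))
  exact hne (Prod.ext hs (by subst hs; linarith))

theorem lowerRelaxation_apply_left {L U : ℝ} (hLU : L ≠ U) :
    (-L / (U - L)) * L + L * U / (U - L) = L := by
  field_simp [sub_ne_zero.2 hLU.symm]
  ring

theorem lowerRelaxation_apply_right {L U : ℝ} (hLU : L ≠ U) :
    (-L / (U - L)) * U + L * U / (U - L) = 0 := by
  field_simp [sub_ne_zero.2 hLU.symm]
  ring

theorem lower_relaxation_optimal_general (L U : ℝ)
    (s t : ℝ)
    (hvalid : ∀ J δ : ℝ, L ≤ J → J ≤ U → 0 ≤ δ → δ ≤ 1 → s * J + t ≤ J * δ)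
    (hne : (s, t) ≠ (-L / (U - L), L * U / (U - L))) :
    ∀ J : ℝ, L < J → J < U →
      s * J + t < (-L / (U - L)) * J + L * U / (U - L) := by
  intro J hLJ hJU
  have hLU : L < U := hLJ.trans hJU
  refine affine_lt_of_le_of_le hLJ hJU ?_ ?_ hne
  · rw [lowerRelaxation_apply_left hLU.ne]
    simpa using hvalid L 1 le_rfl hLU.le zero_le_one le_rfl
  · rw [lowerRelaxation_apply_right hLU.ne]
    simpa using hvalid U 0 hLU.le le_rfl le_rfl zero_le_one

theorem lower_relaxation_optimal (L U : ℝ) (hL : L < 0) (hU : 0 < U)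
    (s t : ℝ)
    (hvalid : ∀ J δ : ℝ, L ≤ J → J ≤ U → 0 ≤ δ → δ ≤ 1 → s * J + t ≤ J * δ)
    (hne : (s, t) ≠ (-L / (U - L), L * U / (U - L))) :
    ∀ J : ℝ, L < J → J < U →
      s * J + t < (-L / (U - L)) * J + L * U / (U - L) :=
  lower_relaxation_optimal_general L U s t hvalid hne
end

section
/- Let L < 0 < U and let s̄ = U/(U-L), t̄ = -L·U/(U-L). Suppose real numbers s, t satisfy J·δ ≤ s·J + t for all J ∈ [L, U] and all δ ∈ [0, 1], and (s, t) ≠ (s̄, t̄). Then for every J with L < J < U, s·J + t > s̄·J + t̄. -/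
/-!
The chord `J ↦ s̄ J + t̄` through `(L, 0)` and `(U, U)` is attained by `J δ` at `(L, 0)` and at
`(U, 1)`, so every valid upper bound `s J + t` lies above it at both endpoints. The gap between two
affine functions is affine: nonnegative at `L` and `U` it is positive strictly between them, unless it
vanishes at both endpoints, which forces the two lines to coincide.
-/

theorem affine_eq_of_eq_of_eq {L U s t s' t' : ℝ} (hLU : L ≠ U)
    (hL : s * L + t = s' * L + t') (hU : s * U + t = s' * U + t') : (s, t) = (s', t') := by
  have hs : s = s' := by
    have h : (s - s') * (L - U) = 0 := by linear_combination hL - hU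
    simpa [sub_eq_zero, hLU] using h
  subst hs
  exact Prod.ext rfl (by linarith)

theorem affine_lt_of_le_of_le_of_ne {L U J s t s' t' : ℝ} (hLJ : L < J) (hJU : J < U)
    (hL : s' * L + t' ≤ s * L + t) (hU : s' * U + t' ≤ s * U + t) (hne : (s, t) ≠ (s', t')) :
    s' * J + t' < s * J + t := by
  have interpolate : (U - L) * (s * J + t - (s' * J + t')) =
      (U - J) * (s * L + t - (s' * L + t')) + (J - L) * (s * U + t - (s' * U + t')) := by ring
  have hpos : 0 < (U - J) * (s * L + t - (s' * L + t')) + (J - L) * (s * U + t - (s' * U + t')) := by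
    rcases hL.lt_or_eq with hL | hL
    · exact add_pos_of_pos_of_nonneg (mul_pos (by linarith) (by linarith))
        (mul_nonneg (by linarith) (by linarith))
    rcases hU.lt_or_eq with hU | hU
    · exact add_pos_of_nonneg_of_pos (mul_nonneg (by linarith) (by linarith))
        (mul_pos (by linarith) (by linarith))
    exact absurd (affine_eq_of_eq_of_eq (hLJ.trans hJU).ne hL.symm hU.symm) hne
  rw [← interpolate] at hpos
  exact sub_pos.1 (pos_of_mul_pos_right hpos (by linarith))

theorem chord_apply_left (L U : ℝ) : U / (U - L) * L + -(L * U) / (U - L) = 0 := by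
  ring

theorem chord_apply_right {L U : ℝ} (hLU : L ≠ U) : U / (U - L) * U + -(L * U) / (U - L) = U := by
  field_simp [sub_ne_zero.2 hLU.symm]
  ring

theorem upper_relaxation_optimal_general (L U : ℝ)
    (s t : ℝ)
    (hvalid : ∀ J δ : ℝ, L ≤ J → J ≤ U → 0 ≤ δ → δ ≤ 1 → J * δ ≤ s * J + t)
    (hne : (s, t) ≠ (U / (U - L), -(L * U) / (U - L))) :
    ∀ J : ℝ, L < J → J < U →
      s * J + t > (U / (U - L)) * J + (-(L * U) / (U - L)) := by
  intro J hLJ hJU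
  have hLU : L < U := hLJ.trans hJU
  refine affine_lt_of_le_of_le_of_ne hLJ hJU ?_ ?_ hne
  · rw [chord_apply_left]
    simpa using hvalid L 0 le_rfl hLU.le le_rfl zero_le_one
  · rw [chord_apply_right hLU.ne]
    simpa using hvalid U 1 hLU.le le_rfl zero_le_one le_rfl

theorem upper_relaxation_optimal (L U : ℝ) (hL : L < 0) (hU : 0 < U)
    (s t : ℝ)
    (hvalid : ∀ J δ : ℝ, L ≤ J → J ≤ U → 0 ≤ δ → δ ≤ 1 → J * δ ≤ s * J + t)
    (hne : (s, t) ≠ (U / (U - L), -(L * U) / (U - L))) :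
    ∀ J : ℝ, L < J → J < U →
      s * J + t > (U / (U - L)) * J + (-(L * U) / (U - L)) :=
  upper_relaxation_optimal_general L U s t hvalid hne
end

section
/- Let A ∈ ℝ^{m×k} and suppose P̲, P̄ ∈ ℝ^{k×p} and vectors q̲, q̄ ∈ ℝᵏ satisfy P̲·h + q̲ ≤ g(h) ≤ P̄·h + q̄ elementwise for all h in a set H, where g : ℝᵖ → ℝᵏ. Define A' = [A]₊·P̄ + [A]₋·P̲ and c = [A]₊·q̄ + [A]₋·q̲, where [A]₊ and [A]₋ denote the elementwise positive and negative parts of A. Then A·g(h) ≤ A'·h + c elementwise for all h ∈ H. -/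
open Matrix

theorem bound_propagation_sound {m k p : ℕ}
    (A : Matrix (Fin m) (Fin k) ℝ)
    (Plow Pbar : Matrix (Fin k) (Fin p) ℝ) (qlow qbar : Fin k → ℝ)
    (H : Set (Fin p → ℝ)) (g : (Fin p → ℝ) → (Fin k → ℝ))
    (hbounds : ∀ h ∈ H, ∀ i, (Plow *ᵥ h + qlow) i ≤ g h i ∧ g h i ≤ (Pbar *ᵥ h + qbar) i)
    (Apos Aneg : Matrix (Fin m) (Fin k) ℝ)
    (hApos : ∀ i j, Apos i j = max (A i j) 0)
    (hAneg : ∀ i j, Aneg i j = min (A i j) 0) :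
    ∀ h ∈ H, ∀ i,
      (A *ᵥ g h) i ≤ ((Apos * Pbar + Aneg * Plow) *ᵥ h + (Apos *ᵥ qbar + Aneg *ᵥ qlow)) i := by
  intro h hH i
  have key : ((Apos * Pbar + Aneg * Plow) *ᵥ h + (Apos *ᵥ qbar + Aneg *ᵥ qlow)) i
      = (Apos *ᵥ (Pbar *ᵥ h + qbar)) i + (Aneg *ᵥ (Plow *ᵥ h + qlow)) i := by
    simp [add_mulVec, mulVec_add, ← mulVec_mulVec]
    ring
  rw [key]
  simp only [mulVec, dotProduct]
  rw [← Finset.sum_add_distrib]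
  apply Finset.sum_le_sum
  intro j _
  have hA : A i j = Apos i j + Aneg i j := by
    rw [hApos, hAneg]; rcases le_total (A i j) 0 with hle | hle <;> simp [hle]
  have hpos : 0 ≤ Apos i j := by rw [hApos]; exact le_max_right _ _
  have hneg : Aneg i j ≤ 0 := by rw [hAneg]; exact min_le_right _ _
  obtain ⟨hl, hu⟩ := hbounds h hH j
  rw [hA, add_mul]
  exact add_le_add (mul_le_mul_of_nonneg_left hu hpos)
    (mul_le_mul_of_nonpos_left hl hneg)
end

section
/- Let J : X → ℝ^{1×d} be a function on a set X and suppose L, U ∈ ℝ^d satisfy L_j ≤ J(x)_j ≤ U_j for all x ∈ X and j. Define for each j with L_j < U_j: a_j = (|U_j| - |L_j|)/(U_j - L_j) and c_j = -a_j·L_j + |L_j|, and a_j = 0, c_j = |L_j| when L_j = U_j. Then for all x ∈ X, ∑_j |J(x)_j| ≤ ∑_j (a_j·J(x)_j + c_j), i.e. ‖J(x)‖∞ (as a row vector matrix norm) is bounded by the linear function J(x)·a + ∑_j c_j. -/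
lemma abs_le_chord {L U t A C : ℝ} (h1 : L ≤ t) (h2 : t ≤ U)
    (hlt : L < U → A = (|U| - |L|) / (U - L) ∧ C = -A * L + |L|)
    (heq : L = U → A = 0 ∧ C = |L|) : |t| ≤ A * t + C := by
  rcases eq_or_lt_of_le (le_trans h1 h2) with h | h
  · obtain ⟨hA, hC⟩ := heq h
    have : t = L := le_antisymm (h ▸ h2) h1
    simp [hA, hC, this]
  · obtain ⟨hA, hC⟩ := hlt h
    have hUL : (0:ℝ) < U - L := by linarith
    have key : |t| * (U - L) ≤ (t - L) * |U| + (U - t) * |L| := by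
      have : t * (U - L) = (t - L) * U + (U - t) * L := by ring
      calc |t| * (U - L) = |t * (U - L)| := by
            rw [abs_mul, abs_of_pos hUL]
        _ = |(t - L) * U + (U - t) * L| := by rw [this]
        _ ≤ |(t - L) * U| + |(U - t) * L| := abs_add_le _ _
        _ = (t - L) * |U| + (U - t) * |L| := by
            rw [abs_mul, abs_mul, abs_of_nonneg (show (0:ℝ) ≤ t - L by linarith),
              abs_of_nonneg (show (0:ℝ) ≤ U - t by linarith)]
    have hgoal : A * t + C = ((t - L) * |U| + (U - t) * |L|) / (U - L) := by
      rw [hC, hA]; field_simp; ring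
    rw [hgoal, le_div_iff₀ hUL]
    linarith [key]

theorem norm_relaxation {d : ℕ} (X : Set (Fin d → ℝ)) (J : (Fin d → ℝ) → Fin d → ℝ)
    (L U a c : Fin d → ℝ)
    (hLU : ∀ x ∈ X, ∀ j, L j ≤ J x j ∧ J x j ≤ U j)
    (hcoef : ∀ j, (L j < U j → a j = (|U j| - |L j|) / (U j - L j) ∧ c j = -a j * L j + |L j|) ∧
                  (L j = U j → a j = 0 ∧ c j = |L j|)) :
    ∀ x ∈ X, ∑ j, |J x j| ≤ ∑ j, (a j * J x j + c j) := by
  intro x hx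
  apply Finset.sum_le_sum
  intro j _
  exact abs_le_chord (hLU x hx j).1 (hLU x hx j).2 (hcoef j).1 (hcoef j).2
end
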